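/- For every integer m ≥ 1, B^{(2m+2)}_{2m-2}(m+1) = (-1)^{m+1} · (2m-2)!/(2m+1)! · (m!)² · 6 H_m^{(2)}, where H_m^{(2)} = Σ_{j=1}^m 1/j² is the generalized harmonic number of order 2. -/

import Mathlib

/-- Generalized Bernoulli polynomial `B_n^{(m)}(t)`, defined by the exponential
generating function `x^m e^{tx}/(e^x-1)^m = Σ_{n≥0} B_n^{(m)}(t) x^n/n!`. -/
noncomputable def genBernoulli (m : ℕ) (t : ℚ) (n : ℕ) : ℚ :=
  (n.factorial : ℚ) * PowerSeries.coeff n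
    (((PowerSeries.mk fun k => bernoulli k / (k.factorial : ℚ)) ^ m) *
      PowerSeries.mk fun k => t ^ k / (k.factorial : ℚ))

/-- The generalized harmonic number `H_m^{(r)} = Σ_{j=1}^m 1/j^r`. -/
def harmonic' (m r : ℕ) : ℚ := ∑ j ∈ Finset.range m, 1 / ((j + 1 : ℚ)) ^ r

namespace GenBernoulliAux
open PowerSeries Finset
noncomputable section

def E (a : ℚ) : ℚ⟦X⟧ := rescale a (exp ℚ)
def U : ℚ⟦X⟧ := E (1/2) - E (-(1/2))
def V : ℚ⟦X⟧ := C (R := ℚ) (1/2) * (E (1/2) + E (-(1/2)))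
def Dd : ℚ⟦X⟧ := PowerSeries.mk fun n => coeff (R := ℚ) (n+1) U
def W : ℚ⟦X⟧ := Dd⁻¹

lemma E_mul_E (a b : ℚ) : E a * E b = E (a + b) := exp_mul_exp_eq_exp_add a b
lemma E_zero : E 0 = 1 := by simp [E, rescale_zero]
lemma coeff_E (a : ℚ) (n : ℕ) : coeff (R := ℚ) n (E a) = a ^ n / n.factorial := by
  simp [E, coeff_rescale, coeff_exp, Algebra.algebraMap_self]
  ring
lemma constantCoeff_E (a : ℚ) : constantCoeff (R := ℚ) (E a) = 1 := by
  have := coeff_E a 0; simpa using this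
lemma dE (a : ℚ) : d⁄dX ℚ (E a) = C (R := ℚ) a * E a := by
  ext n
  simp [PowerSeries.coeff_derivative, coeff_E, coeff_C_mul, Nat.factorial_succ, pow_succ]
  field_simp

lemma Cneg : C (R := ℚ) (-(1/2)) = - C (R := ℚ) (1/2) := by rw [map_neg]

lemma dU : d⁄dX ℚ U = V := by
  simp only [U, V, map_sub, dE]
  rw [Cneg]; ring

lemma dV : d⁄dX ℚ V = C (R := ℚ) (1/4) * U := by
  have e : C (R := ℚ) (1/2) * C (R := ℚ) (1/2) = C (R := ℚ) (1/4) := by rw [← map_mul]; norm_num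
  simp only [U, V, Derivation.leibniz, map_add, dE, smul_eq_mul, PowerSeries.derivative_C]
  rw [Cneg]
  linear_combination (E (1/2) - E (-(1/2))) * e

lemma VV : V * V = 1 + C (R := ℚ) (1/4) * (U * U) := by
  have h2 : E (1/2) * E (-(1/2)) = 1 := by rw [E_mul_E]; norm_num [E_zero]
  have e4 : C (R := ℚ) (1/2) * C (R := ℚ) (1/2) = C (R := ℚ) (1/4) := by rw [← map_mul]; norm_num
  have e1 : (4 : ℚ⟦X⟧) * C (R := ℚ) (1/4) = 1 := by
    rw [show ((4:ℚ⟦X⟧) = C (R := ℚ) 4) by simp [map_ofNat], ← map_mul]; norm_num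
  simp only [U, V]
  linear_combination (E (1/2) + E (-(1/2)))^2 * e4 + (4 * C (R := ℚ) (1/4)) * h2 + e1

lemma constantCoeff_U : constantCoeff (R := ℚ) U = 0 := by
  simp [U, constantCoeff_E]
lemma U_eq : U = X * Dd := by
  ext n
  cases n with
  | zero =>
    rw [coeff_zero_eq_constantCoeff_apply, constantCoeff_U]
    simp
  | succ n => simp [coeff_succ_X_mul, Dd]
lemma coeff_one_U : coeff (R := ℚ) 1 U = 1 := by
  simp [U, coeff_E]
  norm_num
lemma constantCoeff_Dd : constantCoeff (R := ℚ) Dd = 1 := by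
  rw [← coeff_zero_eq_constantCoeff_apply]
  simpa [Dd] using coeff_one_U
lemma DdW : Dd * W = 1 := PowerSeries.mul_inv_cancel _ (by rw [constantCoeff_Dd]; norm_num)
lemma UW : U * W = X := by rw [U_eq, mul_assoc, DdW, mul_one]
lemma constantCoeff_W : constantCoeff (R := ℚ) W = 1 := by
  have h := congrArg (constantCoeff (R := ℚ)) DdW
  simp [constantCoeff_Dd] at h
  simpa using h
lemma constantCoeff_V : constantCoeff (R := ℚ) V = 1 := by
  simp [V, constantCoeff_E]; norm_num

lemma U_ne : U ≠ 0 := by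
  intro h
  have := coeff_one_U
  rw [h] at this
  simp at this

lemma residue (j : ℕ) : coeff (R := ℚ) (j+1) (V * W^(j+2)) = 0 := by
  have h1 : V * W + U * d⁄dX ℚ W = 1 := by
    have h := congrArg (d⁄dX ℚ) UW
    rw [Derivation.leibniz, PowerSeries.derivative_X, dU] at h
    rw [add_comm]
    simpa [smul_eq_mul, mul_comm] using h
  have hd : V * W^(j+2) = W^(j+1) - X * (W^j * d⁄dX ℚ W) := by
    have h2 : (V * W + U * d⁄dX ℚ W) * W^(j+1) = W^(j+1) := by rw [h1, one_mul]
    calc V * W^(j+2) = (V * W) * W^(j+1) := by ring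
    _ = W^(j+1) - (U * d⁄dX ℚ W) * W^(j+1) := by linear_combination h2
    _ = W^(j+1) - (U * W) * (W^j * d⁄dX ℚ W) := by ring
    _ = _ := by rw [UW]
  have hpow : d⁄dX ℚ (W^(j+1)) = ((j+1) : ℕ) • (W^j * d⁄dX ℚ W) := by
    have h := Derivation.leibniz_pow (a := W) (D := d⁄dX ℚ) (j+1)
    simpa [smul_eq_mul] using h
  have hc : ((j:ℚ)+1) * coeff (R := ℚ) j (W^j * d⁄dX ℚ W) = ((j:ℚ)+1) * coeff (R := ℚ) (j+1) (W^(j+1)) := by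
    have h2 : coeff (R := ℚ) j (d⁄dX ℚ (W^(j+1))) = coeff (R := ℚ) (j+1) (W^(j+1)) * ((j:ℚ)+1) := by
      simpa using PowerSeries.coeff_derivative (W^(j+1)) j
    rw [hpow, map_nsmul, nsmul_eq_mul] at h2
    push_cast at h2
    linarith [h2]
  have hne : ((j:ℚ)+1) ≠ 0 := by positivity
  have hc' : coeff (R := ℚ) j (W^j * d⁄dX ℚ W) = coeff (R := ℚ) (j+1) (W^(j+1)) :=
    mul_left_cancel₀ hne hc
  rw [hd, map_sub, coeff_succ_X_mul, hc']
  ring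

lemma dUpow (j : ℕ) : d⁄dX ℚ (U^(j+1)) = ((j+1) : ℕ) • (U^j * V) := by
  have h := Derivation.leibniz_pow (a := U) (D := d⁄dX ℚ) (j+1)
  rw [dU] at h
  simpa [smul_eq_mul] using h

lemma D2 (K : ℕ) : d⁄dX ℚ (d⁄dX ℚ (U^(2*K+2))) =
    C (R := ℚ) (((2*K+2)*(2*K+1) : ℕ) : ℚ) * U^(2*K) + C (R := ℚ) (((K:ℚ)+1)^2) * U^(2*K+2) := by
  have h1 : d⁄dX ℚ (U^(2*K+2)) = ((2*K+2) : ℕ) • (U^(2*K+1) * V) := dUpow (2*K+1)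
  rw [h1, map_nsmul]
  have h2 : d⁄dX ℚ (U^(2*K+1) * V) = U^(2*K+1) * (C (R := ℚ) (1/4) * U) + V * (((2*K+1):ℕ) • (U^(2*K) * V)) := by
    rw [Derivation.leibniz, dV, dUpow (2*K)]
    simp [smul_eq_mul]
    try ring
  rw [h2]
  have hVV := VV
  simp only [nsmul_eq_mul, smul_eq_mul]
  have hc1 : (((2*K+2) : ℕ) : ℚ⟦X⟧) = C (R := ℚ) (2*(K:ℚ)+2) := by
    rw [← map_natCast (C (R := ℚ))]; congr 1; push_cast; ring
  have hc2 : (((2*K+1) : ℕ) : ℚ⟦X⟧) = C (R := ℚ) (2*(K:ℚ)+1) := by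
    rw [← map_natCast (C (R := ℚ))]; congr 1; push_cast; ring
  have hc3 : C (R := ℚ) ((((2*K+2)*(2*K+1) : ℕ)) : ℚ) = C (R := ℚ) (2*(K:ℚ)+2) * C (R := ℚ) (2*(K:ℚ)+1) := by
    rw [← map_mul]; congr 1; push_cast; ring
  have hc4 : C (R := ℚ) (((K:ℚ)+1)^2) = C (R := ℚ) (2*(K:ℚ)+2) * C (R := ℚ) (1/4) + C (R := ℚ) (2*(K:ℚ)+2) * C (R := ℚ) (2*(K:ℚ)+1) * C (R := ℚ) (1/4) := by
    rw [← map_mul, ← map_mul, ← map_mul, ← map_add]; congr 1; ring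
  rw [hc1, hc2, hc3, hc4]
  linear_combination (C (R := ℚ) (2*(K:ℚ)+2) * C (R := ℚ) (2*(K:ℚ)+1) * U^(2*K)) * hVV

lemma D2coeff (K n : ℕ) : ((n:ℚ)+1)*((n:ℚ)+2) * coeff (R := ℚ) (n+2) (U^(2*K+2)) =
    (((2*K+2)*(2*K+1) : ℕ) : ℚ) * coeff (R := ℚ) n (U^(2*K)) + ((K:ℚ)+1)^2 * coeff (R := ℚ) n (U^(2*K+2)) := by
  have h := congrArg (coeff (R := ℚ) n) (D2 K)
  rw [PowerSeries.coeff_derivative, PowerSeries.coeff_derivative] at h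
  rw [map_add, coeff_C_mul, coeff_C_mul] at h
  push_cast at h ⊢
  linarith [h]

def bb (k : ℕ) : ℚ := 2 * (-1)^(k+1) / ((k:ℚ)^2 * (Nat.centralBinom k))
def cc (k : ℕ) : ℚ := -12 * harmonic' (k-1) 2 * bb k

lemma bb_zero : bb 0 = 0 := by simp [bb]
lemma cc_zero : cc 0 = 0 := by simp [cc, bb_zero]
lemma bb_one : bb 1 = 1 := by
  have : Nat.centralBinom 1 = 2 := rfl
  simp [bb, this]
lemma cc_one : cc 1 = 0 := by simp [cc, harmonic']

lemma cb_succ (K : ℕ) : ((K:ℚ)+1) * ((K+1).centralBinom) = 2 * (2*K+1) * K.centralBinom := by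
  exact_mod_cast Nat.succ_mul_centralBinom_succ K

lemma cb_ne (K : ℕ) : ((K.centralBinom : ℚ)) ≠ 0 := by
  exact_mod_cast (Nat.centralBinom_pos K).ne'

lemma bb_mul_denom (K : ℕ) (h : 1 ≤ K) : bb K * ((K:ℚ)^2 * K.centralBinom) = 2*(-1:ℚ)^(K+1) := by
  have hK : ((K:ℚ)) ≠ 0 := Nat.cast_ne_zero.mpr (by omega)
  rw [bb, div_mul_cancel₀]
  exact mul_ne_zero (pow_ne_zero 2 hK) (cb_ne K)

lemma bb_rec (K : ℕ) (h : 1 ≤ K) : bb (K+1) * ((2*(K:ℚ)+2)*(2*K+1)) = -((K:ℚ)^2 * bb K) := by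
  have A := bb_mul_denom (K+1) (by omega)
  have B := bb_mul_denom K h
  have h1 := cb_succ K
  have h3 := cb_ne (K+1)
  have hK1 : ((K:ℚ)+1) ≠ 0 := by positivity
  have hden : (((K:ℚ)+1)^2 * ((K+1).centralBinom : ℚ)) ≠ 0 :=
    mul_ne_zero (pow_ne_zero 2 hK1) h3
  push_cast at A
  apply mul_right_cancel₀ hden
  linear_combination ((2*(K:ℚ)+2)*(2*(K:ℚ)+1)) * A + ((K:ℚ)^2*((K:ℚ)+1)* bb K) * h1 + (2*(2*(K:ℚ)+1)*((K:ℚ)+1)) * B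

lemma bb_rec' (K : ℕ) : bb (K+1) * ((((2*K+2)*(2*K+1) : ℕ)) : ℚ) = (if K = 0 then 2 else 0) - (K:ℚ)^2 * bb K := by
  cases K with
  | zero => norm_num [bb_one, bb_zero]
  | succ J =>
    have h := bb_rec (J+1) (by omega)
    simp only [if_neg (Nat.succ_ne_zero J)]
    push_cast at h ⊢
    linarith [h]

lemma cc_rec (K : ℕ) (h : 1 ≤ K) : cc (K+1) * ((2*(K:ℚ)+2)*(2*K+1)) = 12 * bb K - (K:ℚ)^2 * cc K := by
  obtain ⟨J, rfl⟩ : ∃ J, K = J + 1 := ⟨K - 1, by omega⟩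
  have hH : harmonic' (J+1) 2 = harmonic' J 2 + 1/((J:ℚ)+1)^2 := by
    rw [harmonic', Finset.sum_range_succ, ← harmonic']
  have hbr := bb_rec (J+1) (by omega)
  have hne : ((J:ℚ)+1) ≠ 0 := by positivity
  simp only [cc, Nat.add_sub_cancel]
  push_cast at hbr ⊢
  rw [hH]
  have hinv : 1/((J:ℚ)+1)^2 * ((J:ℚ)+1)^2 = 1 := by field_simp
  linear_combination (-12*(harmonic' J 2 + 1/((J:ℚ)+1)^2)) * hbr + 12 * bb (J+1) * hinv

lemma cc_rec' (K : ℕ) : cc (K+1) * ((((2*K+2)*(2*K+1) : ℕ)) : ℚ) = 12 * bb K - (K:ℚ)^2 * cc K := by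
  cases K with
  | zero => norm_num [cc_one, cc_zero, bb_zero]
  | succ J =>
    have h := cc_rec (J+1) (by omega)
    push_cast at h ⊢
    linarith [h]

lemma coeff_vanish (n k : ℕ) (f : ℚ⟦X⟧) (h : n < k) : coeff (R := ℚ) n (U^k * f) = 0 := by
  have hdvd : (X : ℚ⟦X⟧)^k ∣ U^k * f := by
    rw [U_eq, mul_pow, mul_assoc]
    exact Dvd.intro _ rfl
  exact (PowerSeries.X_pow_dvd_iff.mp hdvd) n h

lemma coeff_vanish' (n k : ℕ) (h : n < k) : coeff (R := ℚ) n (U^k) = 0 := by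
  simpa using coeff_vanish n k 1 h

lemma key_sum (d : ℕ → ℚ) (hd0 : d 0 = 0) (n : ℕ) :
    ((n:ℚ)+1)*((n:ℚ)+2) * ∑ k ∈ range (n+4), d k * coeff (R := ℚ) (n+2) (U^(2*k)) =
      (∑ K ∈ range (n+3), (d (K+1) * (((2*K+2)*(2*K+1) : ℕ) : ℚ)) * coeff (R := ℚ) n (U^(2*K)))
      + (∑ k ∈ range (n+3), (k:ℚ)^2 * d k * coeff (R := ℚ) n (U^(2*k))) := by
  rw [Finset.mul_sum]
  rw [Finset.sum_range_succ' (fun k => ((n:ℚ)+1)*((n:ℚ)+2) * (d k * coeff (R := ℚ) (n+2) (U^(2*k)))) (n+3)]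
  simp only [hd0, zero_mul, mul_zero, add_zero]
  have step : ∀ K ∈ range (n+3), ((n:ℚ)+1)*((n:ℚ)+2) * (d (K+1) * coeff (R := ℚ) (n+2) (U^(2*(K+1))))
      = (d (K+1) * (((2*K+2)*(2*K+1) : ℕ) : ℚ)) * coeff (R := ℚ) n (U^(2*K))
        + ((K:ℚ)+1)^2 * d (K+1) * coeff (R := ℚ) n (U^(2*K+2)) := by
    intro K _
    have h := D2coeff K n
    have e : 2*(K+1) = 2*K+2 := by ring
    rw [e]
    linear_combination d (K+1) * h
  rw [Finset.sum_congr rfl step, Finset.sum_add_distrib]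
  congr 1
  have h4 : ∑ k ∈ range (n+4), (k:ℚ)^2 * d k * coeff (R := ℚ) n (U^(2*k))
      = ∑ K ∈ range (n+3), ((K:ℚ)+1)^2 * d (K+1) * coeff (R := ℚ) n (U^(2*K+2)) := by
    rw [Finset.sum_range_succ' (fun k => (k:ℚ)^2 * d k * coeff (R := ℚ) n (U^(2*k))) (n+3)]
    simp only [hd0, mul_zero, zero_mul, add_zero]
    apply Finset.sum_congr rfl
    intro K _
    have e : 2*(K+1) = 2*K+2 := by ring
    rw [e]; push_cast; ring
  rw [← h4, Finset.sum_range_succ]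
  rw [coeff_vanish' n (2*(n+3)) (by omega)]
  simp

lemma sumfix (g : ℕ → ℚ) (n K K' : ℕ) (hK : n+2 ≤ K) (h' : K ≤ K') :
    ∑ k ∈ range K', g k * coeff (R := ℚ) n (U^(2*k)) = ∑ k ∈ range K, g k * coeff (R := ℚ) n (U^(2*k)) := by
  symm
  apply Finset.sum_subset (Finset.range_subset_range.mpr h')
  intro k _ hk
  rw [Finset.mem_range, not_lt] at hk
  rw [coeff_vanish' n (2*k) (by omega), mul_zero]

lemma ite_sum (n m : ℕ) : ∑ K ∈ range (m+1), (if K = 0 then (2:ℚ) else 0) * coeff (R := ℚ) n (U^(2*K))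
    = 2 * coeff (R := ℚ) n (U^0) := by
  rw [Finset.sum_eq_single 0]
  · simp
  · intro b _ hb; simp [hb]
  · intro h; simp at h

lemma P1c (n : ℕ) : ∑ k ∈ range (n+2), bb k * coeff (R := ℚ) n (U^(2*k)) = coeff (R := ℚ) n (X^2 : ℚ⟦X⟧) := by
  match n with
  | 0 =>
    rw [Finset.sum_eq_zero]
    · simp [coeff_X_pow]
    · rintro (_|k) hk
      · simp [bb_zero]
      · rw [coeff_vanish' 0 (2*(k+1)) (by omega), mul_zero]
  | 1 =>
    rw [Finset.sum_eq_zero]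
    · simp [coeff_X_pow]
    · rintro (_|k) hk
      · simp [bb_zero]
      · rw [coeff_vanish' 1 (2*(k+1)) (by omega), mul_zero]
  | (n+2) =>
    have hcan : ((n:ℚ)+1)*((n:ℚ)+2) ≠ 0 := by positivity
    apply mul_left_cancel₀ hcan
    rw [show n+2+2 = n+4 from rfl, key_sum bb bb_zero n]
    have e1 : ∀ K ∈ range (n+3), (bb (K+1) * (((2*K+2)*(2*K+1) : ℕ) : ℚ)) * coeff (R := ℚ) n (U^(2*K))
        = (if K = 0 then (2:ℚ) else 0) * coeff (R := ℚ) n (U^(2*K)) - (K:ℚ)^2 * bb K * coeff (R := ℚ) n (U^(2*K)) := by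
      intro K _
      rw [bb_rec' K]; ring
    rw [Finset.sum_congr rfl e1, Finset.sum_sub_distrib, ite_sum n (n+2)]
    have hfin : (2:ℚ) * coeff (R := ℚ) n (U^0) = ((n:ℚ)+1)*((n:ℚ)+2) * coeff (R := ℚ) (n+2) (X^2 : ℚ⟦X⟧) := by
      match n with
      | 0 => simp [coeff_X_pow]
      | (j+1) =>
        rw [coeff_X_pow]
        simp only [pow_zero, PowerSeries.coeff_one]
        have h1 : ¬ (j+1+2 = 2) := by omega
        have h2 : ¬ (j+1 = 0) := by omega
        simp [h1, h2]
    linarith [hfin]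

lemma P1 (n K : ℕ) (hK : n + 2 ≤ K) :
    ∑ k ∈ range K, bb k * coeff (R := ℚ) n (U^(2*k)) = coeff (R := ℚ) n (X^2 : ℚ⟦X⟧) := by
  rw [sumfix bb n (n+2) K (le_refl _) hK]
  exact P1c n

lemma P2c (n : ℕ) : ∑ k ∈ range (n+2), cc k * coeff (R := ℚ) n (U^(2*k)) = coeff (R := ℚ) n (X^4 : ℚ⟦X⟧) := by
  match n with
  | 0 =>
    rw [Finset.sum_eq_zero]
    · simp [coeff_X_pow]
    · rintro (_|k) hk
      · simp [cc_zero]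
      · rw [coeff_vanish' 0 (2*(k+1)) (by omega), mul_zero]
  | 1 =>
    rw [Finset.sum_eq_zero]
    · simp [coeff_X_pow]
    · rintro (_|k) hk
      · simp [cc_zero]
      · rw [coeff_vanish' 1 (2*(k+1)) (by omega), mul_zero]
  | (n+2) =>
    have hcan : ((n:ℚ)+1)*((n:ℚ)+2) ≠ 0 := by positivity
    apply mul_left_cancel₀ hcan
    rw [show n+2+2 = n+4 from rfl, key_sum cc cc_zero n]
    have e1 : ∀ K ∈ range (n+3), (cc (K+1) * (((2*K+2)*(2*K+1) : ℕ) : ℚ)) * coeff (R := ℚ) n (U^(2*K))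
        = 12 * (bb K * coeff (R := ℚ) n (U^(2*K))) - (K:ℚ)^2 * cc K * coeff (R := ℚ) n (U^(2*K)) := by
      intro K _
      rw [cc_rec' K]; ring
    rw [Finset.sum_congr rfl e1, Finset.sum_sub_distrib, ← Finset.mul_sum,
      P1 n (n+3) (by omega)]
    have hfin : (12:ℚ) * coeff (R := ℚ) n (X^2 : ℚ⟦X⟧) = ((n:ℚ)+1)*((n:ℚ)+2) * coeff (R := ℚ) (n+2) (X^4 : ℚ⟦X⟧) := by
      rw [coeff_X_pow, coeff_X_pow]
      by_cases h : n = 2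
      · subst h; norm_num
      · have h1 : ¬ (n+2 = 4) := by omega
        simp [h, h1]
    linarith [hfin]

lemma P2 (n K : ℕ) (hK : n + 2 ≤ K) :
    ∑ k ∈ range K, cc k * coeff (R := ℚ) n (U^(2*k)) = coeff (R := ℚ) n (X^4 : ℚ⟦X⟧) := by
  rw [sumfix cc n (n+2) K (le_refl _) hK]
  exact P2c n


lemma term_eq (n k : ℕ) : ((2*k : ℕ):ℚ) * coeff (R := ℚ) n (U^(2*k-1) * V) =
    ((n:ℚ)+1) * coeff (R := ℚ) (n+1) (U^(2*k)) := by
  cases k with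
  | zero =>
    simp [PowerSeries.coeff_one]
  | succ j =>
    rw [show 2*(j+1)-1 = 2*j+1 from by omega, show 2*(j+1) = 2*j+2 from by omega]
    have h := congrArg (coeff (R := ℚ) n) (dUpow (2*j+1))
    rw [PowerSeries.coeff_derivative, map_nsmul, nsmul_eq_mul] at h
    push_cast at h ⊢
    linarith [h]

lemma ClaimB (n K : ℕ) (hK : n + 3 ≤ K) :
    ∑ k ∈ range K, ((2*k : ℕ):ℚ) * cc k * coeff (R := ℚ) n (U^(2*k-1) * V)
      = coeff (R := ℚ) n ((C (R := ℚ) 4) * (X^3 : ℚ⟦X⟧)) := by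
  have e1 : ∀ k ∈ range K, ((2*k : ℕ):ℚ) * cc k * coeff (R := ℚ) n (U^(2*k-1) * V)
      = ((n:ℚ)+1) * (cc k * coeff (R := ℚ) (n+1) (U^(2*k))) := by
    intro k _
    have := term_eq n k
    push_cast at this ⊢
    linear_combination cc k * this
  rw [Finset.sum_congr rfl e1, ← Finset.mul_sum, P2 (n+1) K (by omega)]
  rw [coeff_C_mul, coeff_X_pow, coeff_X_pow]
  by_cases h : n = 3
  · subst h; norm_num
  · have h1 : ¬ (n+1 = 4) := by omega
    simp [h, h1]

lemma coeff4 (M : ℕ) : (4:ℚ) * coeff (R := ℚ) (2*M) (W^(2*M+4)) = (2*(M:ℚ)+4) * cc (M+2) := by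
  have h0 : coeff (R := ℚ) (2*M+3) ((C (R := ℚ) 4 * X^3) * W^(2*M+4)) = 4 * coeff (R := ℚ) (2*M) (W^(2*M+4)) := by
    rw [mul_assoc, coeff_C_mul, coeff_X_pow_mul]
  have h1 : coeff (R := ℚ) (2*M+3) ((C (R := ℚ) 4 * X^3) * W^(2*M+4))
      = ∑ j ∈ range (2*M+4), coeff (R := ℚ) j (C (R := ℚ) 4 * X^3) * coeff (R := ℚ) (2*M+3-j) (W^(2*M+4)) := by
    rw [PowerSeries.coeff_mul, Finset.Nat.sum_antidiagonal_eq_sum_range_succ_mk]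
  have h2 : ∀ j ∈ range (2*M+4), coeff (R := ℚ) j (C (R := ℚ) 4 * X^3) * coeff (R := ℚ) (2*M+3-j) (W^(2*M+4))
      = ∑ k ∈ range (2*M+7), ((2*k : ℕ):ℚ) * cc k * coeff (R := ℚ) j (U^(2*k-1) * V)
          * coeff (R := ℚ) (2*M+3-j) (W^(2*M+4)) := by
    intro j hj
    rw [← Finset.sum_mul, ClaimB j (2*M+7) (by simp at hj; omega)]
  have h3 : ∑ j ∈ range (2*M+4), ∑ k ∈ range (2*M+7), ((2*k : ℕ):ℚ) * cc k
        * coeff (R := ℚ) j (U^(2*k-1) * V) * coeff (R := ℚ) (2*M+3-j) (W^(2*M+4))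
      = ∑ k ∈ range (2*M+7), ((2*k : ℕ):ℚ) * cc k
        * coeff (R := ℚ) (2*M+3) ((U^(2*k-1) * V) * W^(2*M+4)) := by
    rw [Finset.sum_comm]
    apply Finset.sum_congr rfl
    intro k _
    rw [PowerSeries.coeff_mul, Finset.Nat.sum_antidiagonal_eq_sum_range_succ_mk, Finset.mul_sum]
    apply Finset.sum_congr rfl
    intro j _
    ring
  have h4 : ∑ k ∈ range (2*M+7), ((2*k : ℕ):ℚ) * cc k
        * coeff (R := ℚ) (2*M+3) ((U^(2*k-1) * V) * W^(2*M+4))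
      = (2*((M:ℚ)+2)) * cc (M+2) := by
    rw [Finset.sum_eq_single (M+2)]
    · have hmain : coeff (R := ℚ) (2*M+3) ((U^(2*(M+2)-1) * V) * W^(2*M+4)) = 1 := by
        have e : (U^(2*(M+2)-1) * V) * W^(2*M+4) = X^(2*M+3) * (V * W) := by
          rw [show 2*(M+2)-1 = 2*M+3 from by omega, show 2*M+4 = (2*M+3)+1 from by omega,
            pow_succ]
          calc U^(2*M+3) * V * (W^(2*M+3) * W) = (U*W)^(2*M+3) * (V * W) := by ring
          _ = _ := by rw [UW]
        have hcp := coeff_X_pow_mul (V * W) (2*M+3) 0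
        rw [zero_add] at hcp
        rw [e, hcp, coeff_zero_eq_constantCoeff_apply, map_mul, constantCoeff_V, constantCoeff_W]
        norm_num
      rw [hmain]
      push_cast
      ring
    · intro k hk hne
      rcases Nat.lt_or_ge k 2 with h2 | h2
      · interval_cases k
        · simp
        · simp [cc_one]
      · rcases Nat.lt_or_ge k (M+2) with h5 | h5
        · -- 2 ≤ k ≤ M+1 : residue
          have hres : coeff (R := ℚ) (2*M+3) ((U^(2*k-1) * V) * W^(2*M+4)) = 0 := by
            have e : (U^(2*k-1) * V) * W^(2*M+4)
                = X^(2*k-1) * (V * W^((2*M+2-2*k)+3)) := by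
              rw [show 2*M+4 = (2*k-1) + ((2*M+2-2*k)+3) from by omega, pow_add]
              calc U^(2*k-1) * V * (W^(2*k-1) * W^((2*M+2-2*k)+3))
                  = (U*W)^(2*k-1) * (V * W^((2*M+2-2*k)+3)) := by ring
              _ = _ := by rw [UW]
            have hcp := coeff_X_pow_mul (V * W^((2*M+2-2*k)+3)) (2*k-1) ((2*M+2-2*k)+2)
            rw [show ((2*M+2-2*k)+2) + (2*k-1) = 2*M+3 from by omega] at hcp
            rw [e, hcp]
            exact residue ((2*M+2-2*k)+1)
          rw [hres, mul_zero]
        · -- k ≥ M+3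
          have : coeff (R := ℚ) (2*M+3) (U^(2*k-1) * (V * W^(2*M+4))) = 0 :=
            coeff_vanish (2*M+3) (2*k-1) _ (by omega)
          rw [mul_assoc (U^(2*k-1)) V (W^(2*M+4)), this]
          ring
    · intro h; exact absurd (Finset.mem_range.mpr (by omega)) h
  calc (4:ℚ) * coeff (R := ℚ) (2*M) (W^(2*M+4)) = _ := h0.symm
  _ = _ := h1
  _ = _ := Finset.sum_congr rfl h2
  _ = _ := h3
  _ = (2*((M:ℚ)+2)) * cc (M+2) := h4
  _ = (2*(M:ℚ)+4) * cc (M+2) := by ring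


lemma bps_eq : (PowerSeries.mk fun k => bernoulli k / (k.factorial : ℚ)) = bernoulliPowerSeries ℚ := by
  ext n
  simp [bernoulliPowerSeries, Algebra.algebraMap_self]

lemma mkE (t : ℚ) : (PowerSeries.mk fun k => t^k / (k.factorial : ℚ)) = E t := by
  ext n
  simp [coeff_E]

lemma E_one : E 1 = exp ℚ := by
  rw [E, rescale_one]
  rfl

lemma Epow (a : ℚ) (j : ℕ) : (E a)^j = E ((j:ℚ)*a) := by
  induction j with
  | zero => simp [E_zero]
  | succ j ih =>
    rw [pow_succ, ih, E_mul_E]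
    congr 1
    push_cast
    ring

lemma exp_sub_one : exp ℚ - 1 = U * E (1/2) := by
  have h : U * E (1/2) = E (1/2) * E (1/2) - E (-(1/2)) * E (1/2) := by rw [U]; ring
  rw [h, E_mul_E, E_mul_E]
  norm_num [E_zero, E_one]

lemma FW (M : ℕ) : (bernoulliPowerSeries ℚ)^(2*M+4) * E ((M:ℚ)+2) = W^(2*M+4) := by
  have hb := bernoulliPowerSeries_mul_exp_sub_one ℚ
  have hX : (X:ℚ⟦X⟧)^(2*M+4) = (bernoulliPowerSeries ℚ)^(2*M+4) * E ((M:ℚ)+2) * U^(2*M+4) := by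
    calc (X:ℚ⟦X⟧)^(2*M+4) = (bernoulliPowerSeries ℚ * (exp ℚ - 1))^(2*M+4) := by rw [hb]
    _ = (bernoulliPowerSeries ℚ)^(2*M+4) * (E (1/2))^(2*M+4) * U^(2*M+4) := by
        rw [exp_sub_one]; ring
    _ = _ := by
        rw [Epow]
        congr 3
        push_cast
        ring
  have hX2 : (X:ℚ⟦X⟧)^(2*M+4) = W^(2*M+4) * U^(2*M+4) := by
    rw [← mul_pow, mul_comm W U, UW]
  apply mul_right_cancel₀ (pow_ne_zero (2*M+4) U_ne)
  rw [← hX, ← hX2]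

lemma cb_fact (M : ℕ) : ((M:ℚ)+2) * ((M+2).centralBinom : ℚ) * (((M+1).factorial : ℚ))^2
    = 2 * (((2*M+3).factorial : ℚ)) := by
  have h : (2*(M+2)).choose (M+2) * ((M+2).factorial * (M+2).factorial) = (2*(M+2)).factorial := by
    have := Nat.choose_mul_factorial_mul_factorial (show M+2 ≤ 2*(M+2) by omega)
    rw [show 2*(M+2) - (M+2) = M+2 from by omega] at this
    rw [← this]; ring
  have hq : ((M+2).centralBinom : ℚ) * (((M+2).factorial : ℚ) * ((M+2).factorial : ℚ))
      = ((2*(M+2)).factorial : ℚ) := by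
    rw [Nat.centralBinom]
    exact_mod_cast h
  have hf1 : ((M+2).factorial : ℚ) = ((M:ℚ)+2) * ((M+1).factorial : ℚ) := by
    rw [show M+2 = (M+1)+1 from rfl, Nat.factorial_succ]
    push_cast
    ring
  have hf2 : ((2*(M+2)).factorial : ℚ) = (2*(M:ℚ)+4) * ((2*M+3).factorial : ℚ) := by
    rw [show 2*(M+2) = (2*M+3)+1 from by omega, Nat.factorial_succ]
    push_cast
    ring
  rw [hf1, hf2] at hq
  have hne : ((M:ℚ)+2) ≠ 0 := by positivity
  apply mul_left_cancel₀ hne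
  linear_combination hq

lemma bb_M2 (M : ℕ) : bb (M+2) = (-1:ℚ)^(M+3) * (((M+1).factorial : ℚ))^2 / (((M:ℚ)+2) * ((2*M+3).factorial : ℚ)) := by
  have hcb := cb_fact M
  have h1 : ((M:ℚ)+2) ≠ 0 := by positivity
  have h2 := cb_ne (M+2)
  have h3 : (((M+1).factorial : ℚ)) ≠ 0 := by exact_mod_cast (Nat.factorial_pos (M+1)).ne'
  have h4 : (((2*M+3).factorial : ℚ)) ≠ 0 := by exact_mod_cast (Nat.factorial_pos (2*M+3)).ne'
  rw [bb]
  push_cast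
  rw [div_eq_div_iff (by positivity) (by positivity)]
  rw [show ((M:ℚ)+2)^2 = ((M:ℚ)+2)*((M:ℚ)+2) from by ring]
  linear_combination (-(-1:ℚ)^(M+3)*((M:ℚ)+2)) * hcb

end
end GenBernoulliAux

/-- For `m ≥ 1`,
`B^{(2m+2)}_{2m-2}(m+1) = (-1)^{m+1} · (2m-2)!/(2m+1)! · (m!)² · 6 H_m^{(2)}`. -/
theorem genBernoulli_sub_two_value (m : ℕ) (hm : 1 ≤ m) :
    genBernoulli (2 * m + 2) ((m : ℚ) + 1) (2 * m - 2) =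
      (-1) ^ (m + 1) * (((2 * m - 2).factorial : ℚ) / ((2 * m + 1).factorial : ℚ)) *
        ((m.factorial : ℚ)) ^ 2 * 6 * harmonic' m 2 := by
  open GenBernoulliAux in
  obtain ⟨M, rfl⟩ : ∃ M, m = M + 1 := ⟨1 * (m - 1), by omega⟩
  rw [genBernoulli, show 2*(M+1)+2 = 2*M+4 from by omega, show 2*(M+1)-2 = 2*M from by omega,
    show 2*(M+1)+1 = 2*M+3 from by omega,
    show (((M+1):ℕ):ℚ) + 1 = (M:ℚ)+2 from by push_cast; ring,
    bps_eq, mkE, FW M]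
  have h4 := coeff4 M
  have hval : PowerSeries.coeff (R := ℚ) (2*M) (W^(2*M+4)) = ((2*(M:ℚ)+4)/4) * cc (M+2) := by
    linear_combination h4 / 4
  rw [hval, cc, show (M+2)-1 = M+1 from by omega, bb_M2 M]
  have h1 : ((M:ℚ)+2) ≠ 0 := by positivity
  have h4' : (((2*M+3).factorial : ℚ)) ≠ 0 := by exact_mod_cast (Nat.factorial_pos (2*M+3)).ne'
  field_simp
  ring
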